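/- Under the setup of the previous statement, suppose λ*_i satisfies the two optimality conditions Σ_{j=i}^N dR_j/dλ_i + λ₀ᵀ Σ_{j=i}^N dD_j/dλ_i = 0 and λ*ᵢᵀ + dR_i/dD_i = 0 (where dR_i/dD_i is the row vector with dR_i/dλ_i = (dR_i/dD_i)(dD_i/dλ_i)). Then λ*_i = (I + Σ_{j=i+1}^N dD_j/dD_i)ᵀ λ₀ / (1 + Σ_{j=i+1}^N dR_j/dR_i), i.e., λ*_i equals the equivalent bit allocation map λ'_i. -/

import Mathlib

open scoped RealInnerProductSpace

/-!
Write `A = dD_i/dλ_i`. By the chain-rule factorizations every term of the first optimality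
condition factors through `A`, and since `A` is onto the condition becomes an identity of
functionals in `w = A v`:
`(1 + Σ_{j>i} r_j) ρ(w) + ⟪λ₀, (I + Σ_{j>i} M_j) w⟫ = 0`.
The second condition says `ρ = -⟪λ*, ·⟫`, so `(1 + Σ_{j>i} r_j) λ* = (I + Σ_{j>i} M_j)† λ₀`.
-/

section

variable {E F : Type*} [NormedAddCommGroup E] [InnerProductSpace ℝ E]
  [NormedAddCommGroup F] [NormedSpace ℝ F]

theorem sum_smul_add_inner_sum_eq_zero_of_surjective {ι : Type*} {s : Finset ι}
    {A : F →L[ℝ] E} (hA : Function.Surjective A) {ρ : E →L[ℝ] ℝ} {r : ι → ℝ}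
    {M : ι → E →L[ℝ] E} {f : ι → F →L[ℝ] ℝ} {g : ι → F →L[ℝ] E} {lam0 : E}
    (hf : ∀ j ∈ s, f j = r j • ρ.comp A) (hg : ∀ j ∈ s, g j = (M j).comp A)
    (h : ∀ v, (∑ j ∈ s, f j v) + ⟪lam0, ∑ j ∈ s, g j v⟫ = 0) (w : E) :
    (∑ j ∈ s, r j) * ρ w + ⟪lam0, (∑ j ∈ s, M j) w⟫ = 0 := by
  obtain ⟨v, rfl⟩ := hA w
  have hfv : ∑ j ∈ s, f j v = (∑ j ∈ s, r j) * ρ (A v) := by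
    rw [Finset.sum_mul]
    exact Finset.sum_congr rfl fun j hj => by simp [hf j hj]
  have hgv : ∑ j ∈ s, g j v = (∑ j ∈ s, M j) (A v) := by
    rw [FunLike.coe_sum, Finset.sum_apply]
    exact Finset.sum_congr rfl fun j hj => by simp [hg j hj]
  rw [← hfv, ← hgv]
  exact h v

theorem eq_inv_smul_adjoint_apply_of_inner [CompleteSpace E] {c : ℝ} (hc : c ≠ 0)
    {x y : E} {ρ : E → ℝ} {T : E →L[ℝ] E} (hρ : ∀ w, ⟪x, w⟫ + ρ w = 0)
    (h : ∀ w, c * ρ w + ⟪y, T w⟫ = 0) :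
    x = c⁻¹ • ContinuousLinearMap.adjoint T y := by
  rw [eq_inv_smul_iff₀ hc]
  refine ext_inner_right ℝ fun w => ?_
  rw [real_inner_smul_left, ContinuousLinearMap.adjoint_inner_left]
  linear_combination c * hρ w - h w

end

theorem stmt_5_general {d : ℕ} (N i : ℕ) (hiN : i ≤ N)
    (R : ℕ → EuclideanSpace ℝ (Fin d) → ℝ)
    (D : ℕ → EuclideanSpace ℝ (Fin d) → EuclideanSpace ℝ (Fin d))
    (lam0 lamstar : EuclideanSpace ℝ (Fin d))
    (r : ℕ → ℝ) (M : ℕ → EuclideanSpace ℝ (Fin d) →L[ℝ] EuclideanSpace ℝ (Fin d))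
    (hri : r i = 1) (hMi : M i = ContinuousLinearMap.id ℝ (EuclideanSpace ℝ (Fin d)))
    (hchainR : ∀ j ∈ Finset.Icc i N, fderiv ℝ (R j) lamstar = r j • fderiv ℝ (R i) lamstar)
    (hchainD : ∀ j ∈ Finset.Icc i N,
      fderiv ℝ (D j) lamstar = (M j).comp (fderiv ℝ (D i) lamstar))
    (hden : (1 + ∑ j ∈ Finset.Ioc i N, r j) ≠ 0)
    (hinv : Function.Bijective (fderiv ℝ (D i) lamstar))
    (rho : EuclideanSpace ℝ (Fin d) →L[ℝ] ℝ)
    (hrho : fderiv ℝ (R i) lamstar = rho.comp (fderiv ℝ (D i) lamstar))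
    (hfoc : ∀ v : EuclideanSpace ℝ (Fin d),
      (∑ j ∈ Finset.Icc i N, fderiv ℝ (R j) lamstar v)
        + ⟪lam0, ∑ j ∈ Finset.Icc i N, fderiv ℝ (D j) lamstar v⟫ = 0)
    (hsoc : ∀ v : EuclideanSpace ℝ (Fin d), ⟪lamstar, v⟫ + rho v = 0) :
    lamstar = (1 + ∑ j ∈ Finset.Ioc i N, r j)⁻¹ •
      (ContinuousLinearMap.adjoint
        (ContinuousLinearMap.id ℝ (EuclideanSpace ℝ (Fin d))
          + ∑ j ∈ Finset.Ioc i N, M j)) lam0 := by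
  rw [hrho] at hchainR
  have hreduced := sum_smul_add_inner_sum_eq_zero_of_surjective hinv.2 hchainR hchainD hfoc
  simp only [Finset.Icc_eq_cons_Ioc hiN, Finset.sum_cons, hri, hMi] at hreduced
  exact eq_inv_smul_adjoint_apply_of_inner hden hsoc hreduced

/-- Theorem 3.2: if `λ*_i` satisfies the two first-order optimality conditions
`Σ_{j=i}^N dR_j/dλ_i + λ₀ᵀ Σ_{j=i}^N dD_j/dλ_i = 0` and `λ*ᵢᵀ + dR_i/dD_i = 0`,
then `λ*_i = (I + Σ_{j>i} dD_j/dD_i)ᵀ λ₀ / (1 + Σ_{j>i} dR_j/dR_i)`,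
i.e. the equivalent bit allocation map `λ'_i`. -/
theorem stmt_5 {d : ℕ} (N i : ℕ) (hiN : i ≤ N)
    (R : ℕ → EuclideanSpace ℝ (Fin d) → ℝ)
    (D : ℕ → EuclideanSpace ℝ (Fin d) → EuclideanSpace ℝ (Fin d))
    (hRdiff : ∀ j, Differentiable ℝ (R j)) (hDdiff : ∀ j, Differentiable ℝ (D j))
    (lam0 lamstar : EuclideanSpace ℝ (Fin d))
    (r : ℕ → ℝ) (M : ℕ → EuclideanSpace ℝ (Fin d) →L[ℝ] EuclideanSpace ℝ (Fin d))
    (hri : r i = 1) (hMi : M i = ContinuousLinearMap.id ℝ (EuclideanSpace ℝ (Fin d)))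
    (hchainR : ∀ j ∈ Finset.Icc i N, fderiv ℝ (R j) lamstar = r j • fderiv ℝ (R i) lamstar)
    (hchainD : ∀ j ∈ Finset.Icc i N,
      fderiv ℝ (D j) lamstar = (M j).comp (fderiv ℝ (D i) lamstar))
    (hden : (1 + ∑ j ∈ Finset.Ioc i N, r j) ≠ 0)
    (hinv : Function.Bijective (fderiv ℝ (D i) lamstar))
    (rho : EuclideanSpace ℝ (Fin d) →L[ℝ] ℝ)
    (hrho : fderiv ℝ (R i) lamstar = rho.comp (fderiv ℝ (D i) lamstar))
    (hfoc : ∀ v : EuclideanSpace ℝ (Fin d),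
      (∑ j ∈ Finset.Icc i N, fderiv ℝ (R j) lamstar v)
        + ⟪lam0, ∑ j ∈ Finset.Icc i N, fderiv ℝ (D j) lamstar v⟫ = 0)
    (hsoc : ∀ v : EuclideanSpace ℝ (Fin d), ⟪lamstar, v⟫ + rho v = 0) :
    lamstar = (1 + ∑ j ∈ Finset.Ioc i N, r j)⁻¹ •
      (ContinuousLinearMap.adjoint
        (ContinuousLinearMap.id ℝ (EuclideanSpace ℝ (Fin d))
          + ∑ j ∈ Finset.Ioc i N, M j)) lam0 :=
  stmt_5_general N i hiN R D lam0 lamstar r M hri hMi hchainR hchainD hden hinv rho hrho hfoc hsoc
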